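/- arXiv:0904.0841 — 2 statements merged into one kernel-verified Lean document; each statement's English description precedes it below -/
import Mathlib

section
/- For every integer m ≥ 1, d_{m-1}(m) = 2^{-m-1} · (2m+1) · C(2m, m), where d_i(m) = 2^{-2m} · Σ_{k=i}^{m} 2^k · C(2m-2k, m-k) · C(m+k, k) · C(k, i). -/
noncomputable def d (m i : ℕ) : ℚ :=
  (2:ℚ)^(-(2*(m:ℤ))) * ∑ k ∈ Finset.Icc i m,
    (2:ℚ)^k * (Nat.choose (2*m-2*k) (m-k)) * (Nat.choose (m+k) k) * (Nat.choose k i)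

lemma key (n : ℕ) : Nat.choose (2*n+2) (n+1) = 2 * Nat.choose (2*n+1) n := by
  have h1 : Nat.choose (2*n+2) (n+1) = Nat.choose (2*n+1) n + Nat.choose (2*n+1) (n+1) :=
    Nat.choose_succ_succ' (2*n+1) n
  have h2 : Nat.choose (2*n+1) (n+1) = Nat.choose (2*n+1) n := by
    rw [← Nat.choose_symm (by omega : n+1 ≤ 2*n+1)]
    congr 1; omega
  omega

theorem stmt2 (m : ℕ) (hm : 1 ≤ m) :
    d m (m-1) = (2:ℚ)^(-(m:ℤ)-1) * (2*(m:ℚ)+1) * Nat.choose (2*m) m := by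
  obtain ⟨n, rfl⟩ : ∃ n, m = n + 1 := ⟨m - 1, by omega⟩
  unfold d
  rw [show n + 1 - 1 = n from rfl, Finset.sum_Icc_succ_top (by omega : n ≤ n + 1),
    Finset.Icc_self, Finset.sum_singleton]
  rw [show 2*(n+1) - 2*n = 2 from by omega, show n+1 - n = 1 from by omega,
    show 2*(n+1) - 2*(n+1) = 0 from by omega, show n+1 - (n+1) = 0 from by omega,
    show n+1+(n+1) = 2*n+2 from by omega, show n+1+n = 2*n+1 from by omega,
    show 2*(n+1) = 2*n+2 from by omega, key n]
  simp only [Nat.choose_self, Nat.choose_zero_right, Nat.choose_succ_self_right,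
    Nat.choose_one_right]
  norm_num
  push_cast
  rw [← zpow_natCast (2:ℚ) n, ← zpow_natCast (2:ℚ) (n+1)]
  have h2 : (2:ℚ) ≠ 0 := by norm_num
  set x := (2:ℚ)^(n:ℤ) with hxdef
  have hx : x ≠ 0 := zpow_ne_zero _ h2
  have h1 : (2:ℚ)^(2*((n:ℤ)+1)) = 4*x^2 := by
    rw [show 2*((n:ℤ)+1) = n + n + 2 from by ring, zpow_add₀ h2, zpow_add₀ h2, hxdef]; ring
  have h2' : (2:ℚ)^((n+1 : ℕ):ℤ) = 2*x := by
    push_cast; rw [zpow_add₀ h2, hxdef]; ring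
  have h3 : (2:ℚ)^(-1 + -(n:ℤ) - 1) = (4*x)⁻¹ := by
    rw [show (-1 + -(n:ℤ) - 1) = -(n + 2) from by ring, zpow_neg, zpow_add₀ h2, hxdef]
    norm_num; ring
  rw [h1, h2', h3]
  field_simp
  ring
end

section
/- For every integer m ≥ 2, the sequence of Boros-Moll coefficients is log-concave: d_i(m)² ≥ d_{i+1}(m) · d_{i-1}(m) for all 1 ≤ i ≤ m−1. -/
/-!
Write `P_m(a) = ∑ᵢ dᵢ(m) aⁱ = ∑ₖ c_{m,k} (a + 1)ᵏ`. The coefficients `c_{m,k}` satisfy a two-term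
recurrence in `m`, which turns into Moll's recurrence
`2(m+1) d_{i+1}(m+1) = (4m+2i+5) d_{i+1}(m) + (2m+2i+2) dᵢ(m)`.
An induction on `m` along this recurrence gives the ratio bounds
`2(m-j)/(2j+3) ≤ d_{j+1}(m)/d_j(m) ≤ 2(m-j)/(2j+1)`, and log-concavity follows by comparing the
upper bound at `j = i` with the lower bound at `j = i - 1`.
-/

open Finset

/-- The coefficient `c_{m,k}` of `(a + 1)ᵏ` in `P_m(a)`, set to `0` for `k > m` so that sums over
`range` can be shifted freely. -/
noncomputable def bmCoeff (m k : ℕ) : ℚ :=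
  if k ≤ m then 2 ^ k * (2 * m - 2 * k).choose (m - k) * (m + k).choose k / 4 ^ m else 0

lemma bmCoeff_of_lt {m k : ℕ} (h : m < k) : bmCoeff m k = 0 := by
  simp [bmCoeff, h.not_ge]

lemma bmCoeff_succ_zero (m : ℕ) : 2 * (m + 1) * bmCoeff (m + 1) 0 = (2 * m + 1) * bmCoeff m 0 := by
  have h := congrArg (Nat.cast (R := ℚ)) (Nat.succ_mul_centralBinom_succ m)
  simp only [bmCoeff, zero_le, if_true, mul_zero, Nat.sub_zero, Nat.add_zero, Nat.choose_zero_right,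
    ← Nat.centralBinom_eq_two_mul_choose]
  push_cast at h ⊢
  rw [pow_succ]
  field_simp
  linear_combination 2 * h

lemma bmCoeff_succ_succ (m k : ℕ) :
    2 * (m + 1) * bmCoeff (m + 1) (k + 1)
      = (2 * m + 1 - 2 * (k + 1)) * bmCoeff m (k + 1) + 2 * (m + k + 1) * bmCoeff m k := by
  rcases le_or_gt (k + 1) m with hk | hk
  · obtain ⟨n, rfl⟩ := Nat.exists_eq_add_of_le hk
    have hA := congrArg (Nat.cast (R := ℚ)) (Nat.succ_mul_centralBinom_succ n)
    have hS := congrArg (Nat.cast (R := ℚ)) (Nat.add_one_mul_choose_eq (k + 1 + n + k) k)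
    have hT := congrArg (Nat.cast (R := ℚ)) (Nat.choose_mul_succ_eq (k + 1 + n + k + 1) (k + 1))
    simp only [bmCoeff, hk, show k ≤ k + 1 + n by omega, show k + 1 ≤ k + 1 + n + 1 by omega,
      if_true,
      show 2 * (k + 1 + n + 1) - 2 * (k + 1) = 2 * (n + 1) by omega,
      show k + 1 + n + 1 - (k + 1) = n + 1 by omega,
      show 2 * (k + 1 + n) - 2 * (k + 1) = 2 * n by omega,
      show k + 1 + n - (k + 1) = n by omega,
      show 2 * (k + 1 + n) - 2 * k = 2 * (n + 1) by omega,
      show k + 1 + n - k = n + 1 by omega,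
      show k + 1 + n + (k + 1) = k + 1 + n + k + 1 by omega,
      show k + 1 + n + 1 + (k + 1) = k + 1 + n + k + 1 + 1 by omega,
      ← Nat.centralBinom_eq_two_mul_choose]
    rw [show k + 1 + n + k + 1 + 1 - (k + 1) = k + n + 2 by omega] at hT
    push_cast at hA hS hT ⊢
    linear_combination (2 ^ k / 4 ^ (k + 1 + n) : ℚ) * (↑((k + 1 + n + k + 1).choose (k + 1)) * hA
      - ↑(n + 1).centralBinom * hT - 2 * ↑(n + 1).centralBinom * hS)
  · rcases (Nat.lt_succ_iff.mp hk).eq_or_lt with rfl | hk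
    · have hA := congrArg (Nat.cast (R := ℚ)) (Nat.succ_mul_centralBinom_succ m)
      rw [bmCoeff_of_lt (Nat.lt_succ_self m)]
      simp only [bmCoeff, le_refl, if_true, Nat.sub_self, mul_zero, Nat.choose_self,
        ← two_mul, ← Nat.centralBinom_eq_two_mul_choose]
      push_cast at hA ⊢
      linear_combination (2 ^ m / 4 ^ m : ℚ) * hA
    · simp [bmCoeff_of_lt, hk, Nat.lt_succ_of_lt hk]

lemma sum_bmCoeff_succ (m : ℕ) (f : ℕ → ℚ) :
    2 * (m + 1) * ∑ k ∈ range (m + 1 + 1), bmCoeff (m + 1) k * f k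
      = ∑ k ∈ range (m + 1),
          bmCoeff m k * ((2 * m + 1 - 2 * k) * f k + 2 * (m + k + 1) * f (k + 1)) := by
  have hshift : ∑ k ∈ range (m + 1), bmCoeff m k * ((2 * m + 1 - 2 * k) * f k)
      = ∑ k ∈ range (m + 1), (2 * m + 1 - 2 * (k + 1)) * bmCoeff m (k + 1) * f (k + 1)
        + (2 * m + 1) * bmCoeff m 0 * f 0 := by
    calc _ = ∑ k ∈ range (m + 2), bmCoeff m k * ((2 * m + 1 - 2 * k) * f k) := by
          rw [sum_range_succ _ (m + 1), bmCoeff_of_lt (Nat.lt_succ_self m), zero_mul, add_zero]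
      _ = _ := by
          rw [sum_range_succ']
          congr 1
          · exact sum_congr rfl fun k _ => by push_cast; ring
          · push_cast; ring
  have hcarry : ∑ k ∈ range (m + 1), bmCoeff m k * (2 * (m + k + 1) * f (k + 1))
      = ∑ k ∈ range (m + 1), 2 * (m + k + 1) * bmCoeff m k * f (k + 1) :=
    sum_congr rfl fun _ _ => by ring
  rw [mul_sum, sum_range_succ']
  simp only [← mul_assoc, bmCoeff_succ_succ, bmCoeff_succ_zero, add_mul, sum_add_distrib]
  simp only [mul_add (bmCoeff m _), sum_add_distrib, hshift, hcarry]
  ring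

lemma d_eq_sum (m i : ℕ) : d m i = ∑ k ∈ range (m + 1), bmCoeff m k * k.choose i := by
  have h4 : (2 : ℚ) ^ (-(2 * (m : ℤ))) = (4 ^ m)⁻¹ := by
    rw [zpow_neg, zpow_mul]; norm_num
  rw [d, h4, mul_sum]
  refine (sum_subset (fun k hk => ?_) fun k hk hki => ?_).trans (sum_congr rfl fun k hk => ?_)
  · simp only [mem_Icc, mem_range] at hk ⊢
    omega
  · simp only [mem_Icc, mem_range, not_and_or, not_le] at hk hki
    rw [Nat.choose_eq_zero_of_lt (n := k) (k := i) (by omega)]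
    simp
  · rw [bmCoeff, if_pos (Nat.lt_succ_iff.mp (mem_range.mp hk))]
    ring

lemma d_eq_zero_of_lt {m i : ℕ} (h : m < i) : d m i = 0 := by
  simp [d, Icc_eq_empty_of_lt h]

lemma d_nonneg (m i : ℕ) : 0 ≤ d m i := by
  unfold d
  positivity

lemma cast_choose_succ_right_eq (n k : ℕ) :
    (n.choose (k + 1) : ℚ) * (k + 1) = n.choose k * (n - k) := by
  rcases le_or_gt k n with h | h
  · have h' := congrArg (Nat.cast (R := ℚ)) (Nat.choose_succ_right_eq n k)
    push_cast [Nat.cast_sub h] at h'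
    exact h'
  · simp [Nat.choose_eq_zero_of_lt h, Nat.choose_eq_zero_of_lt (Nat.lt_succ_of_lt h)]

lemma d_succ_succ (m i : ℕ) :
    2 * (m + 1) * d (m + 1) (i + 1)
      = (4 * m + 2 * i + 5) * d m (i + 1) + (2 * m + 2 * i + 2) * d m i := by
  simp only [d_eq_sum, sum_bmCoeff_succ]
  simp only [mul_sum, ← sum_add_distrib]
  refine sum_congr rfl fun k _ => ?_
  rw [Nat.choose_succ_succ', Nat.cast_add]
  linear_combination (-2 * bmCoeff m k) * cast_choose_succ_right_eq k i

lemma d_succ_zero (m : ℕ) : 2 * (m + 1) * d (m + 1) 0 = (4 * m + 3) * d m 0 := by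
  simp only [d_eq_sum, sum_bmCoeff_succ]
  simp only [mul_sum, Nat.choose_zero_right, Nat.cast_one]
  exact sum_congr rfl fun k _ => by ring

lemma mul_d_succ_le (m j : ℕ) : (2 * j + 1) * d m (j + 1) ≤ 2 * (m - j) * d m j := by
  induction m generalizing j with
  | zero => rcases j.eq_zero_or_pos with rfl | hj <;> simp [d_eq_zero_of_lt, *]
  | succ m ih =>
    refine le_of_mul_le_mul_left ?_ (by positivity : (0 : ℚ) < 2 * (m + 1))
    cases j with
    | zero =>
      push_cast
      linear_combination d_succ_succ m 0 - 2 * (m + 1) * d_succ_zero m + (4 * m + 5) * ih 0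
        + (2 * m + 4) * d_nonneg m 0
    | succ t =>
      have ih' := ih (t + 1)
      have rec' := d_succ_succ m (t + 1)
      push_cast at ih' rec' ⊢
      linear_combination (2 * t + 3) * rec' - 2 * (m - t) * d_succ_succ m t
        + (4 * m + 2 * t + 7) * ih' + (2 * m + 2 * t + 2) * ih t + 4 * d_nonneg m (t + 1)

lemma le_mul_d_succ (m j : ℕ) : 2 * (m - j) * d m j ≤ (2 * j + 3) * d m (j + 1) := by
  induction m generalizing j with
  | zero => rcases j.eq_zero_or_pos with rfl | hj <;> simp [d_eq_zero_of_lt, *]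
  | succ m ih =>
    refine le_of_mul_le_mul_left ?_ (by positivity : (0 : ℚ) < 2 * (m + 1))
    cases j with
    | zero =>
      push_cast
      linear_combination 2 * (m + 1) * d_succ_zero m - 3 * d_succ_succ m 0 + (4 * m + 5) * ih 0
        + 2 * m * d_nonneg m 0
    | succ t =>
      have ih' := ih (t + 1)
      have rec' := d_succ_succ m (t + 1)
      push_cast at ih' rec' ⊢
      linear_combination 2 * (m - t) * d_succ_succ m t - (2 * t + 5) * rec'
        + (4 * m + 2 * t + 7) * ih' + (2 * m + 2 * t + 2) * ih t

theorem stmt8_general (m i : ℕ) (hi1 : 1 ≤ i) (hi2 : i ≤ m - 1) :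
    (d m i)^2 ≥ d m (i+1) * d m (i-1) := by
  obtain ⟨t, rfl⟩ := Nat.exists_eq_add_of_le' hi1
  rw [Nat.add_sub_cancel, ge_iff_le]
  have hmt : (0 : ℚ) < m - t := sub_pos.mpr (by exact_mod_cast (by omega : t < m))
  have hprod := mul_le_mul (le_mul_d_succ m t) (mul_d_succ_le m (t + 1))
    (mul_nonneg (by positivity) (d_nonneg m _)) (mul_nonneg (by positivity) (d_nonneg m _))
  refine le_of_mul_le_mul_left ?_ (by positivity : (0 : ℚ) < 2 * (m - t) * (2 * t + 3))
  push_cast at hprod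
  linear_combination hprod + 2 * (2 * t + 3) * sq_nonneg (d m (t + 1))

theorem stmt8 (m i : ℕ) (hm : 2 ≤ m) (hi1 : 1 ≤ i) (hi2 : i ≤ m - 1) :
    (d m i)^2 ≥ d m (i+1) * d m (i-1) :=
  stmt8_general m i hi1 hi2
end
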